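/- arXiv:1802.05750 — 4 statements merged into one kernel-verified Lean document; each statement's English description precedes it below -/
import Mathlib

section
/- Let κ be an uncountable regular cardinal with κ^{<κ}=κ. If X ⊆ 2^κ satisfies the selection principle S_1^κ(Γ_κ, Γ_κ), then X has the κ-Hurewicz property U_{<κ}^κ(O_κ, Γ_κ). -/
noncomputable section

open Cardinal Set

namespace GenSp

/-- The index set: a canonical type of order type `κ.ord`. -/
abbrev I (κ : Cardinal.{0}) : Type := κ.ord.ToType

variable (κ : Cardinal.{0}) (A : Type)

/-- The generalized space `A^κ`. -/
abbrev Sp : Type := I κ → A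

/-- The basic clopen set `[x ↾ ξ]`: all functions agreeing with `x` below `ξ`. -/
def cyl (x : Sp κ A) (ξ : I κ) : Set (Sp κ A) := {y | ∀ β < ξ, y β = x β}

/-- The bounded topology on `A^κ`, generated by the basic clopen sets. -/
def bt : TopologicalSpace (Sp κ A) :=
  .generateFrom {S | ∃ x ξ, S = cyl κ A x ξ}

/-- Open in the bounded topology. -/
def OpenK (s : Set (Sp κ A)) : Prop := @IsOpen _ (bt κ A) s

/-- Closed in the bounded topology. -/
def ClosedK (s : Set (Sp κ A)) : Prop := @IsClosed _ (bt κ A) s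

/-- Nowhere dense in the bounded topology. -/
def NwdK (s : Set (Sp κ A)) : Prop := @IsNowhereDense _ (bt κ A) s

/-- κ-meagre: a union of (at most) κ nowhere dense sets. -/
def MeagreK (s : Set (Sp κ A)) : Prop :=
  ∃ f : I κ → Set (Sp κ A), (∀ i, NwdK κ A (f i)) ∧ s = ⋃ i, f i

/-- κ-strongly null set. -/
def SNullK (S : Set (Sp κ A)) : Prop :=
  ∀ ξ : I κ → I κ, ∃ a : I κ → Sp κ A, S ⊆ ⋃ α, cyl κ A (a α) (ξ α)

/-- Coordinatewise addition over `ℤ₂` (translation by `x`). -/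
def xadd (x y : Sp κ Bool) : Sp κ Bool := fun i => xor (x i) (y i)

/-- The covering number of the κ-meagre ideal. -/
def covM : Cardinal :=
  sInf {c | ∃ 𝒜 : Set (Set (Sp κ A)), #𝒜 = c ∧ (∀ s ∈ 𝒜, MeagreK κ A s) ∧ ⋃₀ 𝒜 = Set.univ}

/-- The cofinality of the κ-meagre ideal. -/
def cofM : Cardinal :=
  sInf {c | ∃ 𝒜 : Set (Set (Sp κ A)), #𝒜 = c ∧ (∀ s ∈ 𝒜, MeagreK κ A s) ∧
    ∀ t, MeagreK κ A t → ∃ s ∈ 𝒜, t ⊆ s}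

/-- κ is weakly compact: uncountable and with the partition property κ → (κ)²₂. -/
def IsWeaklyCompact (κ : Cardinal.{0}) : Prop :=
  ℵ₀ < κ ∧ ∀ c : I κ → I κ → Bool, ∃ H : Set (I κ), #H = κ ∧
    ∃ b : Bool, ∀ i ∈ H, ∀ j ∈ H, i < j → c i j = b

/-- `S` is κ-meagre relative to `P` (in the subspace topology). -/
def MeagreInK (P S : Set (Sp κ A)) : Prop :=
  ∃ f : I κ → Set P,
    (∀ i, @IsNowhereDense _ (TopologicalSpace.induced Subtype.val (bt κ A)) (f i)) ∧
    {x : P | (x : Sp κ A) ∈ S} = ⋃ i, f i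

/-- Perfect set in the bounded topology. -/
def PerfK (P : Set (Sp κ A)) : Prop := @Perfect _ (bt κ A) P

/-- Perfectly κ-meagre set. -/
def PMeagreK (S : Set (Sp κ A)) : Prop := ∀ P, PerfK κ A P → MeagreInK κ A P S

/-- κ-λ-set. -/
def KLambdaSet (S : Set (Sp κ A)) : Prop :=
  ∀ B ⊆ S, #B ≤ κ → ∃ G : I κ → Set (Sp κ A),
    (∀ i, OpenK κ A (G i)) ∧ (⋂ i, G i) ∩ S = B

/-- κ-σ-set. -/
def KSigmaSet (S : Set (Sp κ A)) : Prop :=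
  ∀ F : I κ → Set (Sp κ A), (∀ i, ClosedK κ A (F i)) →
    ∃ G : I κ → Set (Sp κ A), (∀ i, OpenK κ A (G i)) ∧
      S ∩ (⋃ i, F i) = S ∩ (⋂ i, G i)

/-- κ-γ-set: every open (proper) κ-cover contains a κ-γ-subcover of size κ. -/
def KGammaSet (X : Set (Sp κ A)) : Prop :=
  ∀ 𝒰 : Set (Set (Sp κ A)), (∀ U ∈ 𝒰, OpenK κ A U) → X ∉ 𝒰 →
    (∀ C ⊆ X, #C < κ → ∃ U ∈ 𝒰, C ⊆ U) →
    ∃ U : I κ → Set (Sp κ A), (∀ α, U α ∈ 𝒰) ∧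
      X ⊆ ⋃ α, ⋂ β, ⋂ (_ : α < β), U β

/-- A (proper) open cover of `X` of size κ, indexed by `I κ`. -/
def IsOCovSeq (X : Set (Sp κ A)) (U : I κ → Set (Sp κ A)) : Prop :=
  (∀ α, OpenK κ A (U α)) ∧ (∀ α, U α ≠ X) ∧ X ⊆ ⋃ α, U α

/-- A (proper) κ-γ-cover of `X`, indexed by `I κ`. -/
def IsGammaCovSeq (X : Set (Sp κ A)) (U : I κ → Set (Sp κ A)) : Prop :=
  (∀ α, OpenK κ A (U α)) ∧ (∀ α, U α ≠ X) ∧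
    X ⊆ ⋃ α, ⋂ β, ⋂ (_ : α < β), U β

/-- The cover `U` is essentially of size κ: no subfamily of size `< κ` covers `X`. -/
def EssK (X : Set (Sp κ A)) (U : I κ → Set (Sp κ A)) : Prop :=
  ∀ s : Set (I κ), #s < κ → ¬ X ⊆ ⋃ β ∈ s, U β

/-- The selection principle `S₁^κ(Γ_κ, Γ_κ)`. -/
def S1GammaGamma (X : Set (Sp κ A)) : Prop :=
  ∀ 𝒰 : I κ → I κ → Set (Sp κ A), (∀ α, IsGammaCovSeq κ A X (𝒰 α)) →
    ∃ f : I κ → I κ, IsGammaCovSeq κ A X (fun α => 𝒰 α (f α))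

/-- The κ-Hurewicz property `U^κ_{<κ}(O_κ, Γ_κ)`. -/
def KHurewicz (X : Set (Sp κ A)) : Prop :=
  ∀ 𝒰 : I κ → I κ → Set (Sp κ A), (∀ α, IsOCovSeq κ A X (𝒰 α)) →
    (∀ α, EssK κ A X (𝒰 α)) →
    ∃ V : I κ → Set (I κ), (∀ α, #(V α) < κ) ∧
      IsGammaCovSeq κ A X (fun α => ⋃ β ∈ V α, 𝒰 α β)

/-- The κ-Menger property `U^κ_{<κ}(O_κ, O_κ)`. -/
def KMenger (X : Set (Sp κ A)) : Prop :=
  ∀ 𝒰 : I κ → I κ → Set (Sp κ A), (∀ α, IsOCovSeq κ A X (𝒰 α)) →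
    (∀ α, EssK κ A X (𝒰 α)) →
    ∃ V : I κ → Set (I κ), (∀ α, #(V α) < κ) ∧
      IsOCovSeq κ A X (fun α => ⋃ β ∈ V α, 𝒰 α β)

/-- The κ-Rothberger property `S₁^κ(O_κ, O_κ)`. -/
def KRothberger (X : Set (Sp κ A)) : Prop :=
  ∀ 𝒰 : I κ → I κ → Set (Sp κ A), (∀ α, IsOCovSeq κ A X (𝒰 α)) →
    ∃ f : I κ → I κ, IsOCovSeq κ A X (fun α => 𝒰 α (f α))

/-- Closed unbounded subset of `I κ`. -/
def IsClubK (S : Set (I κ)) : Prop :=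
  (∀ a : I κ, ∃ b ∈ S, a < b) ∧
  (∀ a : I κ, (∃ b, b < a) → (∀ b < a, ∃ c ∈ S, b < c ∧ c < a) → a ∈ S)

/-- Stationary subset of `I κ`. -/
def IsStatK (S : Set (I κ)) : Prop :=
  ∀ C : Set (I κ), IsClubK κ C → (S ∩ C).Nonempty

/-- The diamond principle `◇_κ(E)`. -/
def DiamondK (E : Set (I κ)) : Prop :=
  ∃ s : I κ → Set (I κ), (∀ α, s α ⊆ Iio α) ∧
    ∀ X : Set (I κ), IsStatK κ {α | α ∈ E ∧ X ∩ Iio α = s α}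

/-- The guessing principle `◇_κ(E, 2^κ, NS_κ)`. -/
def DiamondFunK (E : Set (I κ)) : Prop :=
  ∃ s : I κ → Sp κ Bool,
    ∀ x : Sp κ Bool, IsStatK κ {α | α ∈ E ∧ ∀ β < α, x β = s α β}

/-- `S` is `X`-small. -/
def XSmall (X : Set (I κ)) (S : Set (Sp κ A)) : Prop :=
  ∃ a : I κ → Sp κ A, S ⊆ ⋃ α ∈ X, cyl κ A (a α) α

/-- `S` is small in `A^κ`. -/
def SmallK (S : Set (Sp κ A)) : Prop :=
  ∃ lam : Cardinal, lam < κ ∧ ∀ α : I κ, ∃ T : Set (Sp κ A),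
    #T ≤ lam ∧ S ⊆ ⋃ x ∈ T, cyl κ A x α

/-! The initial unions `⋃_{β<γ} U_β` of an open cover that is essentially of size κ form a
κ-γ-cover (properness is exactly essential size κ, as `Iio γ` has size `< κ`); selecting one of them
for each cover by `S₁^κ(Γ_κ, Γ_κ)` gives the sets `V_α = Iio (f α)` the κ-Hurewicz property asks for. -/

theorem mk_Iio_I_lt (i : I κ) : #(Iio i) < κ := by
  simpa using mk_Iio_lt i

theorem isGammaCovSeq_biUnion_Iio {X : Set (Sp κ A)} {U : I κ → Set (Sp κ A)}
    (hU : IsOCovSeq κ A X U) (hess : EssK κ A X U) :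
    IsGammaCovSeq κ A X fun γ => ⋃ β ∈ Iio γ, U β := by
  obtain ⟨hopen, -, hcover⟩ := hU
  refine ⟨fun γ => ?_, fun γ hγ => ?_, fun x hx => ?_⟩
  · exact @isOpen_biUnion _ _ (bt κ A) _ _ fun β _ => hopen β
  · exact hess (Iio γ) (mk_Iio_I_lt κ γ) hγ.superset
  · obtain ⟨β, hxβ⟩ := mem_iUnion.1 (hcover hx)
    exact mem_iUnion.2 ⟨β, mem_iInter₂.2 fun γ hβγ => mem_biUnion hβγ hxβ⟩

theorem stmt13_general (κ : Cardinal.{0})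
    (X : Set (Sp κ Bool)) (hX : S1GammaGamma κ Bool X) :
    KHurewicz κ Bool X := by
  intro 𝒰 hcov hess
  obtain ⟨f, hf⟩ := hX _ fun α => isGammaCovSeq_biUnion_Iio κ Bool (hcov α) (hess α)
  exact ⟨fun α => Iio (f α), fun α => mk_Iio_I_lt κ (f α), hf⟩

theorem stmt13 (κ : Cardinal.{0}) (hk : Cardinal.aleph0 < κ) (hreg : κ.IsRegular) (hpow : κ ^< κ = κ)
    (X : Set (Sp κ Bool)) (hX : S1GammaGamma κ Bool X) :
    KHurewicz κ Bool X :=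
  stmt13_general κ X hX

end GenSp
end
end

section
/- Let κ be an uncountable regular cardinal with κ^{<κ}=κ. If A ⊆ 2^κ has empty interior and has the κ-Hurewicz property, then A is κ-meagre. Consequently, no λ-κ-Lusin set (κ < λ ≤ 2^κ) has the κ-Hurewicz property. -/
noncomputable section

open Cardinal Set

namespace GenSp

variable (κ : Cardinal.{0}) (A : Type)

/-!
If `closure S` has empty interior, `S` is nowhere dense. Otherwise list the (at most
`κ^{<κ} = κ`) basic sets inside `closure S` so that each one recurs cofinally often, and pick in
the `α`-th of them a point `d_α ∉ S`. The sets `[d_α ↾ β]ᶜ` form an open cover of `S` that is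
essentially of size `κ` because `d_α ∈ closure S`, so the Hurewicz property gives sets `W_α`,
unions of fewer than `κ` of them, with `S ⊆ ⋃_α ⋂_{β>α} W_β`. By regularity of `κ` each `W_β`
is closed, and it misses `d_β`; hence `closure S ∩ ⋂_{β>α} W_β` contains no basic set.

For a `λ`-`κ`-Lusin set `L`: empty interior would make `L` itself `κ`-meagre, while a basic set
inside `L` contains a closed nowhere dense set of size `2^κ ≥ λ`, namely the functions frozen on
a cofinal set of coordinates whose complement still has size `κ`.
-/

section Cardinals

variable {κ A}

lemma mk_Iio_lt_self (ξ : I κ) : #(Iio ξ) < κ := by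
  simpa using mk_Iio_lt ξ

lemma exists_forall_lt_of_mk_lt (hreg : κ.IsRegular) {s : Set (I κ)} (hs : #s < κ) :
    ∃ a, ∀ b ∈ s, b < a := by
  have hcof : Order.cof (I κ) = κ := by
    rw [← Ordinal.cof_type, Ordinal.type_toType, hreg.cof_ord]
  have hs' : ¬ IsCofinal s := fun h => (Order.cof_le h).not_gt (by rwa [hcof])
  simpa [IsCofinal] using hs'

lemma exists_lt_mem_of_le_mk [NoMaxOrder (I κ)] {s : Set (I κ)} (hs : κ ≤ #s) (a : I κ) :
    ∃ b ∈ s, a < b := by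
  by_contra! h
  obtain ⟨a', ha'⟩ := exists_gt a
  have hsub : s ⊆ Iio a' := fun b hb => (h b hb).trans_lt ha'
  exact (hs.trans (mk_le_mk_of_subset hsub)).not_gt (mk_Iio_lt_self a')

lemma le_mk_setOf_snd_eq {J : Type} (p : I κ ≃ I κ × J) (j : J) : κ ≤ #{α | (p α).2 = j} := by
  refine (mk_ord_toType κ).symm.le.trans (mk_le_of_injective (f := fun γ => ⟨p.symm (γ, j), ?_⟩) ?_)
  · simp
  · intro γ γ' h
    simpa using congrArg Subtype.val h

lemma mk_bool_le (hk : ℵ₀ ≤ κ) : #Bool ≤ κ := by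
  simpa using (natCast_le_aleph0 (n := 2)).trans hk

lemma nonempty_equiv_prod (hk : ℵ₀ ≤ κ) {J : Type} [Nonempty J] (hJ : #J ≤ κ) :
    Nonempty (I κ ≃ I κ × J) := by
  rw [← Cardinal.eq, mk_prod, lift_id, lift_id, mk_ord_toType,
    Cardinal.mul_eq_left hk hJ (mk_ne_zero J)]

lemma exists_forall_exists_lt_eq [NoMaxOrder (I κ)] (hk : ℵ₀ ≤ κ) {R : Type} [Nonempty R]
    (hR : #R ≤ κ) : ∃ f : I κ → R, ∀ r a, ∃ b, a < b ∧ f b = r := by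
  obtain ⟨p⟩ := nonempty_equiv_prod hk hR
  refine ⟨fun α => (p α).2, fun r a => ?_⟩
  obtain ⟨b, hb, hab⟩ := exists_lt_mem_of_le_mk (le_mk_setOf_snd_eq p r) a
  exact ⟨b, hab, hb⟩

lemma mk_setOf_cyl_le (hk : ℵ₀ ≤ κ) (hpow : κ ^< κ = κ) (hA : #A ≤ κ) :
    #{S | ∃ x ξ, S = cyl κ A x ξ} ≤ κ := by
  have hrange : {S | ∃ x ξ, S = cyl κ A x ξ} ⊆
      range fun p : Σ ξ : I κ, (Iio ξ → A) => {y | ∀ β (h : β < p.1), y β = p.2 ⟨β, h⟩} := by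
    rintro _ ⟨x, ξ, rfl⟩
    exact ⟨⟨ξ, fun β => x β⟩, rfl⟩
  have hfibre (ξ : I κ) : #(Iio ξ → A) ≤ κ := by
    rw [← power_def]
    exact (power_le_power_right hA).trans ((le_powerlt κ (mk_Iio_lt_self ξ)).trans_eq hpow)
  calc #{S | ∃ x ξ, S = cyl κ A x ξ}
      ≤ #(Σ ξ : I κ, (Iio ξ → A)) := (mk_le_mk_of_subset hrange).trans mk_range_le
    _ ≤ sum fun _ : I κ => κ := by rw [mk_sigma]; exact sum_le_sum _ _ hfibre
    _ = κ := by rw [sum_const', mk_ord_toType, mul_eq_self hk]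

lemma power_mk_compl_le_mk_setOf_forall_mem_eq (x : Sp κ A) (P : Set (I κ)) :
    #A ^ #(Pᶜ : Set (I κ)) ≤ #{y : Sp κ A | ∀ β ∈ P, y β = x β} := by
  classical
  rw [power_def]
  refine mk_le_of_injective
    (f := fun g => ⟨fun β => if h : β ∈ P then x β else g ⟨β, h⟩, fun β hβ => dif_pos hβ⟩) ?_
  intro g g' h
  funext β
  simpa only [dif_neg β.2] using congrFun (congrArg Subtype.val h) β

end Cardinals

section Topology

open TopologicalSpace

attribute [local instance] bt

variable {κ A}

lemma mem_cyl_self (x : Sp κ A) (ξ : I κ) : x ∈ cyl κ A x ξ := fun _ _ => rfl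

lemma cyl_anti (x : Sp κ A) {ξ η : I κ} (h : η ≤ ξ) : cyl κ A x ξ ⊆ cyl κ A x η :=
  fun _ hy β hβ => hy β (hβ.trans_le h)

lemma cyl_eq_of_mem {x y : Sp κ A} {ξ : I κ} (h : y ∈ cyl κ A x ξ) :
    cyl κ A y ξ = cyl κ A x ξ := by
  ext z
  exact forall₂_congr fun β hβ => by rw [h β hβ]

lemma isOpen_cyl (x : Sp κ A) (ξ : I κ) : IsOpen (cyl κ A x ξ) :=
  isOpen_generateFrom_of_mem ⟨x, ξ, rfl⟩

lemma meagreK_of_subset_iUnion {S : Set (Sp κ A)} {F : I κ → Set (Sp κ A)}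
    (hF : ∀ i, NwdK κ A (F i)) (hS : S ⊆ ⋃ i, F i) : MeagreK κ A S :=
  ⟨fun i => S ∩ F i, fun i => IsNowhereDense.mono inter_subset_right (hF i),
    by rw [← inter_iUnion, inter_eq_left.2 hS]⟩

lemma essK_compl_cyl (hreg : κ.IsRegular) {S : Set (Sp κ A)} {d : Sp κ A} (hd : d ∈ closure S) :
    EssK κ A S fun β => (cyl κ A d β)ᶜ := by
  intro s hs hcov
  obtain ⟨b, hb⟩ := exists_forall_lt_of_mk_lt hreg hs
  obtain ⟨y, hyd, hyS⟩ := mem_closure_iff.1 hd _ (isOpen_cyl d b) (mem_cyl_self d b)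
  obtain ⟨β, hβ, hyβ⟩ := mem_iUnion₂.1 (hcov hyS)
  exact hyβ (cyl_anti d (hb β hβ).le hyd)

variable [Nonempty (I κ)]

lemma isTopologicalBasis_cyl : IsTopologicalBasis {S | ∃ x ξ, S = cyl κ A x ξ} where
  exists_subset_inter := by
    rintro _ ⟨a, ξ, rfl⟩ _ ⟨b, η, rfl⟩ x hx
    refine ⟨cyl κ A x (max ξ η), ⟨x, _, rfl⟩, mem_cyl_self x _, subset_inter ?_ ?_⟩
    · exact (cyl_anti x (le_max_left ξ η)).trans (cyl_eq_of_mem hx.1).subset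
    · exact (cyl_anti x (le_max_right ξ η)).trans (cyl_eq_of_mem hx.2).subset
  sUnion_eq := by
    refine eq_univ_of_forall fun x => ⟨_, ⟨x, Classical.arbitrary _, rfl⟩, mem_cyl_self x _⟩
  eq_generateFrom := rfl

lemma isOpen_iff_forall_cyl_subset {s : Set (Sp κ A)} :
    IsOpen s ↔ ∀ x ∈ s, ∃ ξ, cyl κ A x ξ ⊆ s := by
  rw [isTopologicalBasis_cyl.isOpen_iff]
  constructor
  · rintro h x hx
    obtain ⟨_, ⟨y, ξ, rfl⟩, hx, hsub⟩ := h x hx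
    exact ⟨ξ, (cyl_eq_of_mem hx).subset.trans hsub⟩
  · rintro h x hx
    obtain ⟨ξ, hξ⟩ := h x hx
    exact ⟨_, ⟨x, ξ, rfl⟩, mem_cyl_self x ξ, hξ⟩

lemma isClosed_cyl (x : Sp κ A) (ξ : I κ) : IsClosed (cyl κ A x ξ) := by
  refine isOpen_compl_iff.1 (isOpen_iff_forall_cyl_subset.2 fun y hy => ⟨ξ, fun z hz hzx => ?_⟩)
  exact hy ((cyl_eq_of_mem hz).symm.trans (cyl_eq_of_mem hzx) ▸ mem_cyl_self y ξ)

lemma interior_eq_empty_iff_forall_cyl {s : Set (Sp κ A)} :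
    interior s = ∅ ↔ ∀ x ξ, ¬ cyl κ A x ξ ⊆ s := by
  refine ⟨fun h x ξ hsub => ?_, fun h => eq_empty_of_forall_notMem fun x hx => ?_⟩
  · exact (h ▸ interior_maximal hsub (isOpen_cyl x ξ)) (mem_cyl_self x ξ)
  · obtain ⟨ξ, hξ⟩ := isOpen_iff_forall_cyl_subset.1 isOpen_interior x hx
    exact h x ξ (hξ.trans interior_subset)

lemma isOpen_biInter_cyl (hreg : κ.IsRegular) (x : Sp κ A) {V : Set (I κ)} (hV : #V < κ) :
    IsOpen (⋂ η ∈ V, cyl κ A x η) := by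
  obtain ⟨b, hb⟩ := exists_forall_lt_of_mk_lt hreg hV
  refine isOpen_iff_forall_cyl_subset.2 fun y hy => ⟨b, fun z hz => mem_iInter₂.2 fun η hη => ?_⟩
  rw [← cyl_eq_of_mem (mem_iInter₂.1 hy η hη)]
  exact cyl_anti y (hb η hη).le hz

lemma meagreK_of_nwdK {S : Set (Sp κ A)} (hS : NwdK κ A S) : MeagreK κ A S :=
  meagreK_of_subset_iUnion (fun _ => hS) (subset_iUnion (fun _ => S) (Classical.arbitrary _))

section Hurewicz

lemma isOCovSeq_compl_cyl [NoMaxOrder (I κ)] {S : Set (Sp κ A)} (hS : ¬ IsOpen S) {d : Sp κ A}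
    (hd : d ∉ S) : IsOCovSeq κ A S fun β => (cyl κ A d β)ᶜ := by
  refine ⟨fun β => (isClosed_cyl d β).isOpen_compl, fun β hβ => ?_, fun y hy => ?_⟩
  · exact hS (hβ ▸ (isClosed_cyl d β).isOpen_compl)
  · obtain ⟨γ, hγ⟩ := Function.ne_iff.1 (ne_of_mem_of_not_mem hy hd)
    obtain ⟨β, hβ⟩ := exists_gt γ
    exact mem_iUnion.2 ⟨β, fun h => hγ (h γ hβ)⟩

lemma nwdK_closure_inter_iInter_compl_cyl (hreg : κ.IsRegular) {S : Set (Sp κ A)}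
    {d : I κ → Sp κ A} {V : I κ → Set (I κ)} (hV : ∀ β, #(V β) < κ)
    (hd : ∀ x ξ, cyl κ A x ξ ⊆ closure S → ∀ α, ∃ β, α < β ∧ d β ∈ cyl κ A x ξ) (α : I κ) :
    NwdK κ A (closure S ∩ ⋂ β, ⋂ (_ : α < β), ⋃ η ∈ V β, (cyl κ A (d β) η)ᶜ) := by
  have hclosed : IsClosed (closure S ∩ ⋂ β, ⋂ (_ : α < β), ⋃ η ∈ V β, (cyl κ A (d β) η)ᶜ) := by
    refine isClosed_closure.inter (isClosed_iInter fun β => isClosed_iInter fun _ => ?_)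
    rw [← compl_iInter₂]
    exact (isOpen_biInter_cyl hreg _ (hV β)).isClosed_compl
  refine hclosed.isNowhereDense_iff.2 (interior_eq_empty_iff_forall_cyl.2 fun x ξ hsub => ?_)
  obtain ⟨β, hαβ, hdβ⟩ := hd x ξ (hsub.trans inter_subset_left) α
  obtain ⟨η, -, hη⟩ := mem_iUnion₂.1 (mem_iInter₂.1 (hsub hdβ).2 β hαβ)
  exact hη (mem_cyl_self _ η)

lemma exists_seq_mem_closure_diff_cofinally_mem_cyl [NoMaxOrder (I κ)] (hk : ℵ₀ ≤ κ)
    (hpow : κ ^< κ = κ) (hA : #A ≤ κ) {S : Set (Sp κ A)} (hint : interior S = ∅)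
    (hcl : interior (closure S) ≠ ∅) :
    ∃ d : I κ → Sp κ A, (∀ α, d α ∉ S) ∧ (∀ α, d α ∈ closure S) ∧
      ∀ x ξ, cyl κ A x ξ ⊆ closure S → ∀ α, ∃ β, α < β ∧ d β ∈ cyl κ A x ξ := by
  obtain ⟨x₀, ξ₀, h₀⟩ : ∃ x ξ, cyl κ A x ξ ⊆ closure S := by
    simpa using mt interior_eq_empty_iff_forall_cyl.2 hcl
  set R := {c | (∃ x ξ, c = cyl κ A x ξ) ∧ c ⊆ closure S}
  have : Nonempty R := ⟨⟨_, ⟨x₀, ξ₀, rfl⟩, h₀⟩⟩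
  have hR : #R ≤ κ := (mk_le_mk_of_subset fun _ hc => hc.1).trans (mk_setOf_cyl_le hk hpow hA)
  have hout (r : R) : ∃ p ∈ r.1, p ∉ S := by
    obtain ⟨⟨x, ξ, hr⟩, -⟩ := r.2
    by_contra! h
    exact interior_eq_empty_iff_forall_cyl.1 hint x ξ (hr ▸ h)
  choose p hpr hpS using hout
  obtain ⟨f, hf⟩ := exists_forall_exists_lt_eq hk hR
  refine ⟨fun α => p (f α), fun α => hpS _, fun α => (f α).2.2 (hpr _), fun x ξ h α => ?_⟩
  let r : R := ⟨_, ⟨x, ξ, rfl⟩, h⟩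
  obtain ⟨β, hαβ, hβ⟩ := hf r α
  exact ⟨β, hαβ, show p (f β) ∈ r.1 from hβ ▸ hpr r⟩

theorem KHurewicz.meagreK [NoMaxOrder (I κ)] (hk : ℵ₀ ≤ κ) (hreg : κ.IsRegular)
    (hpow : κ ^< κ = κ) (hA : #A ≤ κ) {S : Set (Sp κ A)} (hH : KHurewicz κ A S)
    (hint : interior S = ∅) : MeagreK κ A S := by
  by_cases hcl : interior (closure S) = ∅
  · exact meagreK_of_nwdK hcl
  obtain ⟨d, hdS, hdcl, hd⟩ :=
    exists_seq_mem_closure_diff_cofinally_mem_cyl hk hpow hA hint hcl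
  have hSopen : ¬ IsOpen S := fun h =>
    hcl (by rw [← h.interior_eq, hint, closure_empty, interior_empty])
  obtain ⟨V, hV, -, -, hγ⟩ := hH (fun α β => (cyl κ A (d α) β)ᶜ)
    (fun α => isOCovSeq_compl_cyl hSopen (hdS α)) (fun α => essK_compl_cyl hreg (hdcl α))
  refine meagreK_of_subset_iUnion (nwdK_closure_inter_iInter_compl_cyl hreg hV hd) fun y hy => ?_
  obtain ⟨α, hα⟩ := mem_iUnion.1 (hγ hy)
  exact mem_iUnion.2 ⟨α, subset_closure hy, hα⟩

end Hurewicz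

section Lusin

lemma interior_setOf_forall_mem_eq [Nontrivial A] (x : Sp κ A) {P : Set (I κ)}
    (hP : IsCofinal P) : interior {y : Sp κ A | ∀ β ∈ P, y β = x β} = ∅ := by
  refine interior_eq_empty_iff_forall_cyl.2 fun z η hsub => ?_
  obtain ⟨β, hβP, hηβ⟩ := hP η
  obtain ⟨a, ha⟩ := exists_ne (x β)
  have hmem : Function.update z β a ∈ cyl κ A z η :=
    fun γ hγ => Function.update_of_ne (hγ.trans_le hηβ).ne _ _
  exact ha (by simpa using hsub hmem β hβP)

variable [NoMaxOrder (I κ)]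

lemma isClosed_setOf_forall_mem_eq (x : Sp κ A) (P : Set (I κ)) :
    IsClosed {y : Sp κ A | ∀ β ∈ P, y β = x β} := by
  refine isOpen_compl_iff.1 (isOpen_iff_forall_cyl_subset.2 fun y hy => ?_)
  obtain ⟨β, hβP, hβ⟩ := not_forall₂.1 hy
  obtain ⟨γ, hγ⟩ := exists_gt β
  exact ⟨γ, fun z hz hzx => hβ ((hz β hγ).symm.trans (hzx β hβP))⟩

lemma exists_nwdK_subset_cyl_power_le (hk : ℵ₀ ≤ κ) [Nontrivial A] (x : Sp κ A) (ξ : I κ) :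
    ∃ D ⊆ cyl κ A x ξ, NwdK κ A D ∧ #A ^ κ ≤ #D := by
  obtain ⟨p⟩ := nonempty_equiv_prod hk (mk_bool_le hk)
  set P := Iio ξ ∪ {β | (p β).2 = true}
  refine ⟨{y : Sp κ A | ∀ β ∈ P, y β = x β}, fun y hy β hβ => hy β (Or.inl hβ), ?_, ?_⟩
  · have hP : IsCofinal P := fun a =>
      (exists_lt_mem_of_le_mk (le_mk_setOf_snd_eq p true) a).imp fun β hβ => ⟨Or.inr hβ.1, hβ.2.le⟩
    exact (isClosed_setOf_forall_mem_eq x P).isNowhereDense_iff.2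
      (interior_setOf_forall_mem_eq x hP)
  · have hfree : κ ≤ #(Pᶜ : Set (I κ)) := by
      by_contra! h
      have hsub : {β | (p β).2 = false} ⊆ Pᶜ ∪ Iio ξ := fun β hβ =>
        (em (β < ξ)).elim Or.inr fun h => Or.inl fun hP => hP.elim h fun ht => by simp_all
      exact lt_irrefl κ <| calc
        κ ≤ #{β | (p β).2 = false} := le_mk_setOf_snd_eq p false
        _ ≤ #(Pᶜ ∪ Iio ξ : Set (I κ)) := mk_le_mk_of_subset hsub
        _ ≤ #(Pᶜ : Set (I κ)) + #(Iio ξ) := mk_union_le _ _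
        _ < κ := add_lt_of_lt hk h (mk_Iio_lt_self ξ)
    exact (power_le_power_left (mk_ne_zero A) hfree).trans
      (power_mk_compl_le_mk_setOf_forall_mem_eq x P)

variable (κ A) in
def IsLusinK (lam : Cardinal) (L : Set (Sp κ A)) : Prop :=
  lam ≤ #L ∧ ∀ X, MeagreK κ A X → #↥(L ∩ X) < lam

theorem IsLusinK.not_kHurewicz (hk : ℵ₀ ≤ κ) (hreg : κ.IsRegular) (hpow : κ ^< κ = κ)
    (hA : #A ≤ κ) [Nontrivial A] {lam : Cardinal} (hlam : lam ≤ #A ^ κ) {L : Set (Sp κ A)}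
    (hL : IsLusinK κ A lam L) : ¬ KHurewicz κ A L := by
  intro hH
  by_cases hint : interior L = ∅
  · have hLL := hL.2 L (hH.meagreK hk hreg hpow hA hint)
    rw [inter_self] at hLL
    exact hLL.not_ge hL.1
  obtain ⟨x, hx⟩ := nonempty_iff_ne_empty.2 hint
  obtain ⟨ξ, hξ⟩ := isOpen_iff_forall_cyl_subset.1 isOpen_interior x hx
  obtain ⟨D, hDcyl, hD, hDmk⟩ := exists_nwdK_subset_cyl_power_le hk x ξ
  have hLD := hL.2 D (meagreK_of_nwdK hD)
  rw [inter_eq_right.2 (hDcyl.trans (hξ.trans interior_subset))] at hLD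
  exact hLD.not_ge (hlam.trans hDmk)

end Lusin

end Topology

theorem stmt14 (κ : Cardinal.{0}) (hk : Cardinal.aleph0 < κ) (hreg : κ.IsRegular) (hpow : κ ^< κ = κ) :
    (∀ S : Set (Sp κ Bool), @interior _ (bt κ Bool) S = ∅ →
        KHurewicz κ Bool S → MeagreK κ Bool S) ∧
    (∀ lam : Cardinal.{0}, κ < lam → lam ≤ 2 ^ κ →
      ∀ L : Set (Sp κ Bool), lam ≤ #L →
        (∀ X, MeagreK κ Bool X → #↥(L ∩ X) < lam) → ¬ KHurewicz κ Bool L) := by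
  have : NoMaxOrder (I κ) := Cardinal.noMaxOrder hk.le
  have : Nonempty (I κ) := nonempty_ord_toType (aleph0_pos.trans hk).ne'
  refine ⟨fun S hint hH => hH.meagreK hk.le hreg hpow (mk_bool_le hk.le) hint, ?_⟩
  intro lam _ hlam L hL hLusin
  exact IsLusinK.not_kHurewicz hk.le hreg hpow (mk_bool_le hk.le) (by rwa [mk_bool]) ⟨hL, hLusin⟩

end GenSp
end
end

section
/- Let κ be an uncountable regular cardinal with κ^{<κ}=κ. If A ⊆ 2^κ has the κ-Rothberger property S_1^κ(O_κ, O_κ), then A is κ-strongly null. -/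
noncomputable section

open Cardinal Set

namespace GenSp

variable (κ : Cardinal.{0}) (A : Type)

section Rothberger

variable {κ A}

theorem openK_cyl (x : Sp κ A) (ξ : I κ) : OpenK κ A (cyl κ A x ξ) :=
  TopologicalSpace.isOpen_generateFrom_of_mem ⟨x, ξ, rfl⟩

theorem mk_Iio_arrow_le (hA : #A ≤ κ) (hpow : κ ^< κ = κ) (ξ : I κ) : #(Iio ξ → A) ≤ #(I κ) :=
  calc #(Iio ξ → A) = #A ^ #(Iio ξ) := (power_def _ _).symm
    _ ≤ κ ^ #(Iio ξ) := power_le_power_right hA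
    _ ≤ κ ^< κ := le_powerlt κ (by simpa using mk_Iio_lt ξ)
    _ = #(I κ) := by rw [hpow, mk_ord_toType]

theorem exists_cyl_cover [Nonempty A] (hA : #A ≤ κ) (hpow : κ ^< κ = κ) (ξ : I κ) :
    ∃ x : I κ → Sp κ A, ∀ y, ∃ β, y ∈ cyl κ A (x β) ξ := by
  obtain ⟨e⟩ := mk_Iio_arrow_le hA hpow ξ
  let extend (h : Iio ξ → A) : Sp κ A := fun i =>
    if hi : i < ξ then h ⟨i, hi⟩ else Classical.arbitrary A
  refine ⟨fun β => extend (Function.invFun e β), fun y => ?_⟩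
  obtain ⟨β, hβ⟩ := Function.invFun_surjective e.injective fun i => y i
  exact ⟨β, fun i hi => by simp [extend, hβ, hi]⟩

/-- If `S` lies in no single cylinder `[x ↾ ξ α]`, the cylinders of length `ξ α` form a proper
open cover of `S` of size `κ` for each `α`, and a Rothberger selection from these covers is
exactly the witness to strong nullness. -/
theorem sNullK_of_kRothberger [Nonempty A] (hA : #A ≤ κ) (hpow : κ ^< κ = κ)
    {S : Set (Sp κ A)} (hS : KRothberger κ A S) : SNullK κ A S := by
  intro ξ
  by_cases hcyl : ∃ x α, S ⊆ cyl κ A x (ξ α)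
  · obtain ⟨x, α, hx⟩ := hcyl
    exact ⟨fun _ => x, hx.trans (subset_iUnion (fun α => cyl κ A x (ξ α)) α)⟩
  push Not at hcyl
  choose x hx using fun α => exists_cyl_cover hA hpow (ξ α)
  have hcov (α : I κ) : IsOCovSeq κ A S fun β => cyl κ A (x α β) (ξ α) :=
    ⟨fun β => openK_cyl _ _, fun β h => hcyl _ α h.ge, fun y _ => mem_iUnion.2 (hx α y)⟩
  obtain ⟨f, -, -, hf⟩ := hS _ hcov
  exact ⟨fun α => x α (f α), hf⟩

end Rothberger

theorem stmt16_general (κ : Cardinal.{0}) (hk : Cardinal.aleph0 < κ) (hpow : κ ^< κ = κ)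
    (S : Set (Sp κ Bool)) (hS : KRothberger κ Bool S) :
    SNullK κ Bool S :=
  sNullK_of_kRothberger (by simpa using (natCast_lt_aleph0 (n := 2)).le.trans hk.le) hpow hS

theorem stmt16 (κ : Cardinal.{0}) (hk : Cardinal.aleph0 < κ) (hreg : κ.IsRegular) (hpow : κ ^< κ = κ)
    (S : Set (Sp κ Bool)) (hS : KRothberger κ Bool S) :
    SNullK κ Bool S :=
  stmt16_general κ hk hpow S hS

end GenSp
end
end

section
/- Let κ be an uncountable regular cardinal with κ^{<κ}=κ. If ◇_κ(E) holds for E ⊆ κ, then 2^κ is E-small: there exists ⟨a_α⟩_{α∈E} with a_α ∈ 2^κ such that 2^κ = ⋃_{α∈E}[a_α ↾ α]. In particular, under ◇_κ, 2^κ is C-small for every closed unbounded C ⊆ κ. -/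
noncomputable section

open Cardinal Set

namespace GenSp

variable (κ : Cardinal.{0}) (A : Type)

/-
The ◇-sequence, read as a sequence of characteristic functions `s α : 2^κ`, is itself the
covering family: every `x ∈ 2^κ` is guessed by some `s α` with `α ∈ E` (and in any prescribed
club), which means exactly `x ∈ [s α ↾ α]`.
-/

variable {κ A}

lemma isClubK_univ [NoMaxOrder (I κ)] : IsClubK κ univ :=
  ⟨fun a => (exists_gt a).imp fun _ hb => ⟨mem_univ _, hb⟩, fun _ _ _ => mem_univ _⟩

lemma IsStatK.mono {S T : Set (I κ)} (hST : S ⊆ T) (hS : IsStatK κ S) : IsStatK κ T :=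
  fun C hC => (hS C hC).mono (inter_subset_inter_left C hST)

lemma XSmall.mono {X Y : Set (I κ)} {S : Set (Sp κ A)} (hXY : X ⊆ Y) (hS : XSmall κ A X S) :
    XSmall κ A Y S := by
  obtain ⟨a, ha⟩ := hS
  exact ⟨a, ha.trans <| biUnion_subset_biUnion_left hXY⟩

lemma DiamondK.diamondFunK {E : Set (I κ)} (h : DiamondK κ E) : DiamondFunK κ E := by
  classical
  obtain ⟨s, -, hs⟩ := h
  refine ⟨fun α β => decide (β ∈ s α), fun x => (hs {β | x β}).mono ?_⟩
  rintro α ⟨hαE, hguess⟩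
  refine ⟨hαE, fun β hβ => ?_⟩
  simp [← hguess, hβ]

lemma DiamondFunK.xSmall_inter {E C : Set (I κ)} (h : DiamondFunK κ E) (hC : IsClubK κ C) :
    XSmall κ Bool (E ∩ C) univ := by
  obtain ⟨s, hs⟩ := h
  refine ⟨s, fun x _ => ?_⟩
  obtain ⟨α, ⟨hαE, hguess⟩, hαC⟩ := hs x C hC
  exact mem_biUnion ⟨hαE, hαC⟩ hguess

theorem stmt18_general (κ : Cardinal.{0}) (hk : Cardinal.aleph0 < κ) :
    (∀ E : Set (I κ), DiamondK κ E → XSmall κ Bool E Set.univ) ∧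
    (DiamondK κ Set.univ → ∀ C, IsClubK κ C → XSmall κ Bool C Set.univ) := by
  have : NoMaxOrder (I κ) := Cardinal.noMaxOrder hk.le
  exact ⟨fun E hE => (hE.diamondFunK.xSmall_inter isClubK_univ).mono inter_subset_left,
    fun hD C hC => (hD.diamondFunK.xSmall_inter hC).mono inter_subset_right⟩

theorem stmt18 (κ : Cardinal.{0}) (hk : Cardinal.aleph0 < κ) (hreg : κ.IsRegular) (hpow : κ ^< κ = κ) :
    (∀ E : Set (I κ), DiamondK κ E → XSmall κ Bool E Set.univ) ∧
    (DiamondK κ Set.univ → ∀ C, IsClubK κ C → XSmall κ Bool C Set.univ) :=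
  stmt18_general κ hk

end GenSp
end
end
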